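/- arXiv:1601.00398 — 7 statements merged into one kernel-verified Lean document; each statement's English description precedes it below -/
import Mathlib

section
/- Let M be a noncommutative prime Γ-ring satisfying assumption (A), and let T : M → M be a left centralizer. If T(x) lies in the center Z(M) for every x ∈ M, then T = 0. -/
theorem stmt_2 (M Γ : Type*) [AddCommGroup M] [AddCommGroup Γ]
    (p : M → Γ → M → M)
    (hadd1 : ∀ x y a z, p (x + y) a z = p x a z + p y a z)
    (hadd2 : ∀ x a b z, p x (a + b) z = p x a z + p x b z)
    (hadd3 : ∀ x a y z, p x a (y + z) = p x a y + p x a z)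
    (hassoc : ∀ x a y b z, p (p x a y) b z = p x a (p y b z))
    (hA : ∀ x a y b z, p (p x a y) b z = p (p x b y) a z)
    (hprime : ∀ a b : M, (∀ (x : M) (γ δ : Γ), p (p a γ x) δ b = 0) → a = 0 ∨ b = 0)
    (hnoncomm : ∃ (x y : M) (a : Γ), p x a y ≠ p y a x)
    (T : M → M)
    (hTadd : ∀ x y, T (x + y) = T x + T y)
    (hTcent : ∀ x a y, T (p x a y) = p (T x) a y)
    (hcentral : ∀ (x y : M) (a : Γ), p (T x) a y = p y a (T x)) :
    ∀ x, T x = 0 := by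
  have hsub3 : ∀ x a y z, p x a (y - z) = p x a y - p x a z := by
    intro x a y z
    have h := hadd3 x a (y - z) z
    rw [sub_add_cancel] at h
    exact eq_sub_of_add_eq h.symm
  -- key: T w annihilates commutators
  have key : ∀ (w y z : M) (α β : Γ), p (T w) α (p y β z) = p (T w) α (p z β y) := by
    intro w y z α β
    have h1 : p (p (T w) α y) β z = p z β (p (T w) α y) := by
      have := hcentral (p w α y) z β
      rwa [hTcent] at this
    calc p (T w) α (p y β z) = p (p (T w) α y) β z := (hassoc _ _ _ _ _).symm
      _ = p z β (p (T w) α y) := h1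
      _ = p (p z β (T w)) α y := (hassoc _ _ _ _ _).symm
      _ = p (p (T w) β z) α y := by rw [← hcentral w z β]
      _ = p (p (T w) α z) β y := hA _ _ _ _ _
      _ = p (T w) α (p z β y) := hassoc _ _ _ _ _
  obtain ⟨u, v, a, huv⟩ := hnoncomm
  set c : M := p u a v - p v a u with hc
  have hcne : c ≠ 0 := sub_ne_zero.mpr huv
  have hann : ∀ (w : M) (α : Γ), p (T w) α c = 0 := by
    intro w α
    rw [hc, hsub3, key w u v α a, sub_self]
  intro x
  rcases hprime (T x) c (fun y γ δ => by rw [← hTcent x γ y]; exact hann _ _) with h | h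
  · exact h
  · exact absurd h hcne
end

section
/- Let M be a noncommutative prime Γ-ring satisfying assumption (A), and let T : M → M be a left centralizer such that T(x)β[z,y]_α = 0 for all x,y,z ∈ M and α,β ∈ Γ. Then T = 0. -/
theorem stmt_3 (M Γ : Type*) [AddCommGroup M] [AddCommGroup Γ]
    (p : M → Γ → M → M)
    (hadd1 : ∀ x y a z, p (x + y) a z = p x a z + p y a z)
    (hadd2 : ∀ x a b z, p x (a + b) z = p x a z + p x b z)
    (hadd3 : ∀ x a y z, p x a (y + z) = p x a y + p x a z)
    (hassoc : ∀ x a y b z, p (p x a y) b z = p x a (p y b z))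
    (hA : ∀ x a y b z, p (p x a y) b z = p (p x b y) a z)
    (hprime : ∀ a b : M, (∀ (x : M) (γ δ : Γ), p (p a γ x) δ b = 0) → a = 0 ∨ b = 0)
    (hnoncomm : ∃ (x y : M) (a : Γ), p x a y ≠ p y a x)
    (T : M → M)
    (hTadd : ∀ x y, T (x + y) = T x + T y)
    (hTcent : ∀ x a y, T (p x a y) = p (T x) a y)
    (hyp : ∀ (x y z : M) (a b : Γ), p (T x) b (p z a y - p y a z) = 0) :
    ∀ x, T x = 0 := by
  intro x
  obtain ⟨u, v, a, h⟩ := hnoncomm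
  rcases hprime (T x) (p u a v - p v a u) (fun w γ δ => by
    have := hyp (p x γ w) v u a δ
    rwa [hTcent] at this) with h1 | h2
  · exact h1
  · exact absurd (sub_eq_zero.mp h2) h
end

section
/- Let M be a 2-torsion free noncommutative semiprime Γ-ring satisfying assumption (A), and let S, T : M → M be left centralizers such that [[S(x),T(x)]_α, S(x)]_β = 0 for all x ∈ M and α,β ∈ Γ. Then S(x) δ [S(x),T(x)]_α = 0 for all x ∈ M and α,δ ∈ Γ. -/
set_option maxHeartbeats 4000000 in
theorem stmt_6 (M Γ : Type*) [AddCommGroup M] [AddCommGroup Γ]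
    (p : M → Γ → M → M)
    (hadd1 : ∀ x y a z, p (x + y) a z = p x a z + p y a z)
    (hadd2 : ∀ x a b z, p x (a + b) z = p x a z + p x b z)
    (hadd3 : ∀ x a y z, p x a (y + z) = p x a y + p x a z)
    (hassoc : ∀ x a y b z, p (p x a y) b z = p x a (p y b z))
    (hA : ∀ x a y b z, p (p x a y) b z = p (p x b y) a z)
    (hsemiprime : ∀ a : M, (∀ (x : M) (γ δ : Γ), p (p a γ x) δ a = 0) → a = 0)
    (htor : ∀ x : M, x + x = 0 → x = 0)
    (hnoncomm : ∃ (x y : M) (a : Γ), p x a y ≠ p y a x)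
    (S T : M → M)
    (hSadd : ∀ x y, S (x + y) = S x + S y)
    (hScent : ∀ x a y, S (p x a y) = p (S x) a y)
    (hTadd : ∀ x y, T (x + y) = T x + T y)
    (hTcent : ∀ x a y, T (p x a y) = p (T x) a y)
    (hyp : ∀ (x : M) (a b : Γ),
      p (p (S x) a (T x) - p (T x) a (S x)) b (S x) -
        p (S x) b (p (S x) a (T x) - p (T x) a (S x)) = 0) :
    ∀ (x : M) (a δ : Γ), p (S x) δ (p (S x) a (T x) - p (T x) a (S x)) = 0 := by
  have hswap : ∀ x α y β z, p x α (p y β z) = p x β (p y α z) := by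
    intro x α y β z
    rw [← hassoc, hA, hassoc]
  have hp0r : ∀ (u : M) (α : Γ), p u α 0 = 0 := by
    intro u α
    have h := hadd3 u α 0 0
    rw [add_zero] at h
    have h2 : p u α 0 + 0 = p u α 0 + p u α 0 := by rw [add_zero]; exact h
    exact (add_left_cancel h2).symm
  have hp0l : ∀ (α : Γ) (u : M), p 0 α u = 0 := by
    intro α u
    have h := hadd1 0 0 α u
    rw [add_zero] at h
    have h2 : p 0 α u + 0 = p 0 α u + p 0 α u := by rw [add_zero]; exact h
    exact (add_left_cancel h2).symm
  have hpsubr : ∀ (u : M) (α : Γ) (y z : M), p u α (y - z) = p u α y - p u α z := by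
    intro u α y z
    have h := hadd3 u α (y - z) z
    rw [sub_add_cancel] at h
    exact eq_sub_of_add_eq h.symm
  have hpsubl : ∀ (y z : M) (α : Γ) (u : M), p (y - z) α u = p y α u - p z α u := by
    intro y z α u
    have h := hadd1 (y - z) z α u
    rw [sub_add_cancel] at h
    exact eq_sub_of_add_eq h.symm
  have hSsub : ∀ u v, S (u - v) = S u - S v := by
    intro u v
    have h := hSadd (u - v) v
    rw [sub_add_cancel] at h
    exact eq_sub_of_add_eq h.symm
  have hTsub : ∀ u v, T (u - v) = T u - T v := by
    intro u v
    have h := hTadd (u - v) v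
    rw [sub_add_cancel] at h
    exact eq_sub_of_add_eq h.symm
  intro x a δ
  have geni : ∀ (w : M) (γ α β : Γ),
      (((((p ((p (p (S x) γ w) α (T x)) - (p (T x) α (p (S x) γ w))) β (S x)) - (p (S x) β ((p (p (S x) γ w) α (T x)) - (p (T x) α (p (S x) γ w))))) + ((p ((p (S x) α (p (T x) γ w)) - (p (p (T x) γ w) α (S x))) β (S x)) - (p (S x) β ((p (S x) α (p (T x) γ w)) - (p (p (T x) γ w) α (S x)))))) + ((p ((p (S x) α (T x)) - (p (T x) α (S x))) β (p (S x) γ w)) - (p (p (S x) γ w) β ((p (S x) α (T x)) - (p (T x) α (S x))))))) = 0 := by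
    intro w γ α β
    have hplus := hyp (x + p x γ w) α β
    have hminus := hyp (x - p x γ w) α β
    have hcube := hyp (p x γ w) α β
    simp only [hSadd, hSsub, hScent, hTadd, hTsub, hTcent] at hplus hminus hcube
    have key : ((((p ((p (p (S x) γ w) α (T x)) - (p (T x) α (p (S x) γ w))) β (S x)) - (p (S x) β ((p (p (S x) γ w) α (T x)) - (p (T x) α (p (S x) γ w))))) + ((p ((p (S x) α (p (T x) γ w)) - (p (p (T x) γ w) α (S x))) β (S x)) - (p (S x) β ((p (S x) α (p (T x) γ w)) - (p (p (T x) γ w) α (S x)))))) + ((p ((p (S x) α (T x)) - (p (T x) α (S x))) β (p (S x) γ w)) - (p (p (S x) γ w) β ((p (S x) α (T x)) - (p (T x) α (S x)))))) + ((((p ((p (p (S x) γ w) α (T x)) - (p (T x) α (p (S x) γ w))) β (S x)) - (p (S x) β ((p (p (S x) γ w) α (T x)) - (p (T x) α (p (S x) γ w))))) + ((p ((p (S x) α (p (T x) γ w)) - (p (p (T x) γ w) α (S x))) β (S x)) - (p (S x) β ((p (S x) α (p (T x) γ w)) - (p (p (T x) γ w) α (S x)))))) + ((p ((p (S x) α (T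 x)) - (p (T x) α (S x))) β (p (S x) γ w)) - (p (p (S x) γ w) β ((p (S x) α (T x)) - (p (T x) α (S x)))))) =
        (((p ((p ((S x) + (p (S x) γ w)) α ((T x) + (p (T x) γ w))) - (p ((T x) + (p (T x) γ w)) α ((S x) + (p (S x) γ w)))) β ((S x) + (p (S x) γ w))) - (p ((S x) + (p (S x) γ w)) β ((p ((S x) + (p (S x) γ w)) α ((T x) + (p (T x) γ w))) - (p ((T x) + (p (T x) γ w)) α ((S x) + (p (S x) γ w)))))) - ((p ((p ((S x) - (p (S x) γ w)) α ((T x) - (p (T x) γ w))) - (p ((T x) - (p (T x) γ w)) α ((S x) - (p (S x) γ w)))) β ((S x) - (p (S x) γ w))) - (p ((S x) - (p (S x) γ w)) β ((p ((S x) - (p (S x) γ w)) α ((T x) - (p (T x) γ w))) - (p ((T x) - (p (T x) γ w)) α ((S x) - (p (S x) γ w))))))) - (((p ((p (p (S x) γ w) α (p (T x) γ w)) - (p (p (T x) γ w) α (p (S x) γ w))) β (p (S x) γ w)) - (p (p (S x) γ w) β ((p (p (S x) γ w) α (p (T x) γ w)) - (p (p (T x) γ w) α (p (S x) γ w)))))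 + ((p ((p (p (S x) γ w) α (p (T x) γ w)) - (p (p (T x) γ w) α (p (S x) γ w))) β (p (S x) γ w)) - (p (p (S x) γ w) β ((p (p (S x) γ w) α (p (T x) γ w)) - (p (p (T x) γ w) α (p (S x) γ w)))))) := by
      simp only [hpsubl, hpsubr, hadd1, hadd3, hassoc]
      abel
    rw [hplus, hminus, hcube] at key
    simp only [sub_zero, zero_sub, add_zero, neg_zero, sub_self] at key
    exact htor _ key
  refine hsemiprime _ fun n g e => ?_
  have sw1 : ∀ (x y z : M), p x δ (p y a z) = p x a (p y δ z) := fun x y z => hswap x δ y a z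
  have sw2 : ∀ (x y z : M), p x g (p y a z) = p x a (p y g z) := fun x y z => hswap x g y a z
  have sw3 : ∀ (x y z : M), p x g (p y δ z) = p x δ (p y g z) := fun x y z => hswap x g y δ z
  have sw4 : ∀ (x y z : M), p x e (p y a z) = p x a (p y e z) := fun x y z => hswap x e y a z
  have sw5 : ∀ (x y z : M), p x e (p y δ z) = p x δ (p y e z) := fun x y z => hswap x e y δ z
  have sw6 : ∀ (x y z : M), p x e (p y g z) = p x g (p y e z) := fun x y z => hswap x e y g z
  have final : (p (p (p (S x) δ ((p (S x) a (T x)) - (p (T x) a (S x)))) g n) e (p (S x) δ ((p (S x) a (T x)) - (p (T x) a (S x))))) = ((((((((((((((((2 : ℤ) • (p (p (p (p ((p ((p (S x) a (T x)) - (p (T x) a (S x))) a (S x)) - (p (S x) a ((p (S x) a (T x)) - (p (T x) a (S x))))) δ (S x)) δ n) g (S x)) e (T x))) + ((-2 : ℤ) • (p (p (p (p ((p ((p (S x) a (T x)) - (p (T x) a (S x))) a (S x)) - (p (S x) a ((p (S x) a (T x)) - (p (T x) a (S x))))) δ (S x)) δ n) g (T x)) e (S x)))) + ((2 : ℤ)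 • (p (p (p (p ((p ((p (S x) a (T x)) - (p (T x) a (S x))) a (S x)) - (p (S x) a ((p (S x) a (T x)) - (p (T x) a (S x))))) δ n) δ (S x)) g (S x)) e (T x)))) + ((-6 : ℤ) • (p (p (p (p ((p ((p (S x) a (T x)) - (p (T x) a (S x))) a (S x)) - (p (S x) a ((p (S x) a (T x)) - (p (T x) a (S x))))) δ n) δ (S x)) g (T x)) e (S x)))) + ((4 : ℤ) • (p (p (p (p ((p ((p (S x) a (T x)) - (p (T x) a (S x))) a (S x)) - (p (S x) a ((p (S x) a (T x)) - (p (T x) a (S x))))) δ n) δ (T x)) g (S x)) e (S x)))) + ((1 : ℤ) • (p (S x) e (p (p (p ((p ((p (S x) a (T x)) - (p (T x) a (S x))) a (S x)) - (p (S x) a ((p (S x) a (T x)) - (p (T x) a (S x))))) δ n) δ (S x)) g (T x))))) + ((-1 : ℤ) • (p (S x) e (p (p (p ((p ((p (S x) a (T x)) - (p (T x) a (S x))) a (S x)) - (p (S x) a ((p (S x) a (T x)) - (p (T x) a (S x))))) δ n) δ (T x)) g (S x))))) + ((-2 : ℤ) • (p (S x) e (p (S x) g (p (T x) δ (p n δ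 ((p ((p (S x) a (T x)) - (p (T x) a (S x))) a (S x)) - (p (S x) a ((p (S x) a (T x)) - (p (T x) a (S x))))))))))) + ((2 : ℤ) • (p (S x) e (p (T x) g (p (S x) δ (p n δ ((p ((p (S x) a (T x)) - (p (T x) a (S x))) a (S x)) - (p (S x) a ((p (S x) a (T x)) - (p (T x) a (S x))))))))))) + ((-3 : ℤ) • (p (S x) e (p (T x) g (p ((((p ((p (p (S x) a n) a (T x)) - (p (T x) a (p (S x) a n))) δ (S x)) - (p (S x) δ ((p (p (S x) a n) a (T x)) - (p (T x) a (p (S x) a n))))) + ((p ((p (S x) a (p (T x) a n)) - (p (p (T x) a n) a (S x))) δ (S x)) - (p (S x) δ ((p (S x) a (p (T x) a n)) - (p (p (T x) a n) a (S x)))))) + ((p ((p (S x) a (T x)) - (p (T x) a (S x))) δ (p (S x) a n)) - (p (p (S x) a n) δ ((p (S x) a (T x)) - (p (T x) a (S x)))))) δ (S x)))))) + ((2 : ℤ) • (p (T x) e (p (S x) g (p ((((p ((p (p (S x) a n) a (T x)) - (p (T x) a (p (S x) a n))) δ (S x)) - (p (S x) δ ((p (p (S x) a n) a (T x)) - (p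 (T x) a (p (S x) a n))))) + ((p ((p (S x) a (p (T x) a n)) - (p (p (T x) a n) a (S x))) δ (S x)) - (p (S x) δ ((p (S x) a (p (T x) a n)) - (p (p (T x) a n) a (S x)))))) + ((p ((p (S x) a (T x)) - (p (T x) a (S x))) δ (p (S x) a n)) - (p (p (S x) a n) δ ((p (S x) a (T x)) - (p (T x) a (S x)))))) δ (S x)))))) + ((1 : ℤ) • (p (S x) e (p ((((p ((p (p (S x) a (p (T x) δ n)) a (T x)) - (p (T x) a (p (S x) a (p (T x) δ n)))) δ (S x)) - (p (S x) δ ((p (p (S x) a (p (T x) δ n)) a (T x)) - (p (T x) a (p (S x) a (p (T x) δ n)))))) + ((p ((p (S x) a (p (T x) a (p (T x) δ n))) - (p (p (T x) a (p (T x) δ n)) a (S x))) δ (S x)) - (p (S x) δ ((p (S x) a (p (T x) a (p (T x) δ n))) - (p (p (T x) a (p (T x) δ n)) a (S x)))))) + ((p ((p (S x) a (T x)) - (p (T x) a (S x))) δ (p (S x) a (p (T x) δ n))) - (p (p (S x) a (p (T x) δ n)) δ ((p (S x) a (T x)) - (p (T x) a (S x)))))) g (S x))))) + ((3 : ℤ)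 • (p (S x) e (p (T x) g ((((p ((p (p (S x) a (p n δ (S x))) a (T x)) - (p (T x) a (p (S x) a (p n δ (S x))))) δ (S x)) - (p (S x) δ ((p (p (S x) a (p n δ (S x))) a (T x)) - (p (T x) a (p (S x) a (p n δ (S x))))))) + ((p ((p (S x) a (p (T x) a (p n δ (S x)))) - (p (p (T x) a (p n δ (S x))) a (S x))) δ (S x)) - (p (S x) δ ((p (S x) a (p (T x) a (p n δ (S x)))) - (p (p (T x) a (p n δ (S x))) a (S x)))))) + ((p ((p (S x) a (T x)) - (p (T x) a (S x))) δ (p (S x) a (p n δ (S x)))) - (p (p (S x) a (p n δ (S x))) δ ((p (S x) a (T x)) - (p (T x) a (S x)))))))))) + ((-2 : ℤ) • (p (T x) e (p (S x) g ((((p ((p (p (S x) a (p n δ (S x))) a (T x)) - (p (T x) a (p (S x) a (p n δ (S x))))) δ (S x)) - (p (S x) δ ((p (p (S x) a (p n δ (S x))) a (T x)) - (p (T x) a (p (S x) a (p n δ (S x))))))) + ((p ((p (S x) a (p (T x) a (p n δ (S x)))) - (p (p (T x) a (p n δ (S x))) a (S x))) δ (S x)) - (p (S x) δ ((p (S x)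 a (p (T x) a (p n δ (S x)))) - (p (p (T x) a (p n δ (S x))) a (S x)))))) + ((p ((p (S x) a (T x)) - (p (T x) a (S x))) δ (p (S x) a (p n δ (S x)))) - (p (p (S x) a (p n δ (S x))) δ ((p (S x) a (T x)) - (p (T x) a (S x)))))))))) + ((-1 : ℤ) • (p (S x) e ((((p ((p (p (S x) a (p (p (T x) δ n) g (S x))) a (T x)) - (p (T x) a (p (S x) a (p (p (T x) δ n) g (S x))))) δ (S x)) - (p (S x) δ ((p (p (S x) a (p (p (T x) δ n) g (S x))) a (T x)) - (p (T x) a (p (S x) a (p (p (T x) δ n) g (S x))))))) + ((p ((p (S x) a (p (T x) a (p (p (T x) δ n) g (S x)))) - (p (p (T x) a (p (p (T x) δ n) g (S x))) a (S x))) δ (S x)) - (p (S x) δ ((p (S x) a (p (T x) a (p (p (T x) δ n) g (S x)))) - (p (p (T x) a (p (p (T x) δ n) g (S x))) a (S x)))))) + ((p ((p (S x) a (T x)) - (p (T x) a (S x))) δ (p (S x) a (p (p (T x) δ n) g (S x)))) - (p (p (S x) a (p (p (T x) δ n) g (S x))) δ ((p (S x) a (T x)) - (p (T x) a (S x)))))))))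 := by
    simp only [hpsubl, hpsubr, hadd1, hadd3, hassoc, sw1, sw2, sw3, sw4, sw5, sw6]
    abel
  simp only [hyp, geni, hp0l, hp0r, smul_zero, add_zero, zero_add, sub_zero, zero_sub,
    neg_zero, smul_neg, neg_neg] at final
  exact final
end

section
/- Let R be a 2-torsion free semiprime ring, and let S, T : R → R be left centralizers (additive maps with S(xy) = S(x)y and T(xy) = T(x)y). If [S(x),T(x)]S(x) + S(x)[S(x),T(x)] = 0 holds for all x ∈ R, then [S(x),T(x)] = 0 for all x ∈ R, where [a,b] = ab − ba. -/
theorem stmt_8 (R : Type*) [Ring R]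
    (hsemiprime : ∀ a : R, (∀ x : R, a * x * a = 0) → a = 0)
    (htor : ∀ x : R, x + x = 0 → x = 0)
    (S T : R → R)
    (hSadd : ∀ x y, S (x + y) = S x + S y)
    (hScent : ∀ x y, S (x * y) = S x * y)
    (hTadd : ∀ x y, T (x + y) = T x + T y)
    (hTcent : ∀ x y, T (x * y) = T x * y)
    (hyp : ∀ x : R,
      (S x * T x - T x * S x) * S x + S x * (S x * T x - T x * S x) = 0) :
    ∀ x : R, S x * T x - T x * S x = 0 := by
  -- S and T send 0 to 0 and negatives to negatives
  have hSzero : S 0 = 0 := by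
    have h := hSadd 0 0
    simp only [add_zero] at h
    exact (left_eq_add.mp h)
  have hTzero : T 0 = 0 := by
    have h := hTadd 0 0
    simp only [add_zero] at h
    exact (left_eq_add.mp h)
  have hSneg : ∀ y, S (-y) = - S y := by
    intro y
    have h := hSadd y (-y)
    rw [add_neg_cancel, hSzero] at h
    exact eq_neg_of_add_eq_zero_right h.symm
  have hTneg : ∀ y, T (-y) = - T y := by
    intro y
    have h := hTadd y (-y)
    rw [add_neg_cancel, hTzero] at h
    exact eq_neg_of_add_eq_zero_right h.symm
  -- the hypothesis simplifies to S z * S z * T z = T z * S z * S z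
  have hH : ∀ z, S z * S z * T z - T z * (S z * S z) = 0 := fun z => by
    linear_combination (norm := noncomm_ring) hyp z
  intro x
  -- partial linearization (degree (2,1) component)
  have hP : ∀ y, S x * S x * T y + S x * S y * T x + S y * S x * T x
      - T x * S x * S y - T x * S y * S x - T y * S x * S x = 0 := by
    intro y
    have h1 := hH (x + y)
    rw [hSadd, hTadd] at h1
    have h2 := hH (x + -y)
    rw [hSadd, hTadd, hSneg, hTneg] at h2
    refine htor _ ?_
    linear_combination (norm := noncomm_ring) h1 - h2 - 2 * hH y
  -- substitute y := x * w
  have hU1 : ∀ w, S x * S x * w * T x + S x * w * S x * T x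
      - T x * S x * w * S x - T x * w * S x * S x = 0 := by
    intro w
    have h1 := hP (x * w)
    rw [hScent, hTcent] at h1
    linear_combination (norm := noncomm_ring) h1 - hH x * w
  have hIV : ∀ m, (S x * T x - T x * S x) * m * S x * T x
      - T x * ((S x * T x - T x * S x) * m * S x) = 0 := by
    intro m
    linear_combination (norm := noncomm_ring)
      hU1 (T x * m) - T x * hU1 m - hH x * m * T x
  have hVIII : ∀ m, T x * S x * m * (S x * T x - T x * S x)
      - S x * m * (S x * T x - T x * S x) * T x = 0 := by
    intro m
    linear_combination (norm := noncomm_ring)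
      hU1 (m * T x) - hU1 m * T x - T x * m * hH x
  have hstar : ∀ m, T x * ((S x * T x - T x * S x) * m * (S x * T x - T x * S x))
      - (S x * T x - T x * S x) * m * (S x * T x - T x * S x) * T x = 0 := by
    intro m
    linear_combination (norm := noncomm_ring) hVIII (T x * m) - T x * hVIII m
  have hkey : ∀ w u, (S x * T x - T x * S x) * w * (S x * T x - T x * S x) * u
      * (S x * T x - T x * S x) = 0 := by
    intro w u
    linear_combination (norm := noncomm_ring)
      hIV w * u * (S x * T x - T x * S x) + hstar (w * S x * u)
      - (S x * T x - T x * S x) * w * hVIII u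
  have hN : ∀ w, (S x * T x - T x * S x) * w * (S x * T x - T x * S x) = 0 := by
    intro w
    refine hsemiprime _ (fun u => ?_)
    linear_combination (norm := noncomm_ring) hkey w u * w * (S x * T x - T x * S x)
  exact hsemiprime _ hN
end

section
/- Let R be a noncommutative prime ring and T : R → R a left centralizer such that T(x) lies in the center Z(R) for every x ∈ R. Then T = 0. -/
theorem stmt_10 (R : Type*) [Ring R]
    (hprime : ∀ a b : R, (∀ x : R, a * x * b = 0) → a = 0 ∨ b = 0)
    (hnoncomm : ∃ x y : R, x * y ≠ y * x)
    (T : R → R)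
    (hTadd : ∀ x y, T (x + y) = T x + T y)
    (hTcent : ∀ x y, T (x * y) = T x * y)
    (hcentral : ∀ x y : R, T x * y = y * T x) :
    ∀ x, T x = 0 := by
  obtain ⟨u, v, huv⟩ := hnoncomm
  intro x
  have key : ∀ w : R, T x * w * (u * v - v * u) = 0 := by
    intro w
    have h1 : T x * (u * v) = T x * (v * u) := by
      calc T x * (u * v) = T x * u * v := by rw [mul_assoc]
        _ = T (x * u) * v := by rw [hTcent]
        _ = v * T (x * u) := hcentral _ _
        _ = v * (T x * u) := by rw [hTcent]
        _ = v * (u * T x) := by rw [hcentral]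
        _ = (v * u) * T x := by rw [mul_assoc]
        _ = T x * (v * u) := (hcentral _ _).symm
    have h2 : T x * (u * v - v * u) = 0 := by rw [mul_sub, h1, sub_self]
    calc T x * w * (u * v - v * u) = w * T x * (u * v - v * u) := by rw [hcentral]
      _ = w * (T x * (u * v - v * u)) := by rw [mul_assoc]
      _ = 0 := by rw [h2, mul_zero]
  rcases hprime _ _ key with h | h
  · exact h
  · exact absurd (sub_eq_zero.mp h) huv
end

section
/- Let R be a 2-torsion free semiprime ring and S, T : R → R left centralizers such that [S(x),T(x)]S(x) + S(x)[S(x),T(x)] = 0 for all x ∈ R. Then S(x)[S(x),T(x)] = 0 and [S(x),T(x)]S(x) = 0 for all x ∈ R. -/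
private theorem stmt_15_aux (R : Type*) [Ring R]
    (hsemiprime : ∀ a : R, (∀ x : R, a * x * a = 0) → a = 0)
    (htor : ∀ x : R, x + x = 0 → x = 0)
    (s t : R)
    (hx : (s * t - t * s) * s + s * (s * t - t * s) = 0)
    (E : ∀ y : R, (s * y) * ((s * y) * (t * y)) = (t * y) * ((s * y) * (s * y))) :
    s * (s * t - t * s) = 0 ∧ (s * t - t * s) * s = 0 := by
  have F1 : s * (s * t) = t * (s * s) := by
    linear_combination (norm := noncomm_ring) hx
  have F2 : s * (s * (s * t - t * s)) = (s * t - t * s) * (s * s) := by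
    linear_combination (norm := noncomm_ring) s * hx - hx * s
  have D : ∀ y z : R,
      s*z*(s*y*(t*y)) + s*y*(s*z*(t*y)) + s*y*(s*y*(t*z))
        = t*z*(s*y*(s*y)) + t*y*(s*z*(s*y)) + t*y*(s*y*(s*z)) := by
    intro y z
    have h2 : (s*z*(s*y*(t*y)) + s*y*(s*z*(t*y)) + s*y*(s*y*(t*z))
        - (t*z*(s*y*(s*y)) + t*y*(s*z*(s*y)) + t*y*(s*y*(s*z))))
        + (s*z*(s*y*(t*y)) + s*y*(s*z*(t*y)) + s*y*(s*y*(t*z))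
        - (t*z*(s*y*(s*y)) + t*y*(s*z*(s*y)) + t*y*(s*y*(s*z)))) = 0 := by
      linear_combination (norm := noncomm_ring) E (y+z) - E (y-z) - 2 * E z
    exact sub_eq_zero.mp (htor _ h2)
  have P : ∀ z : R, s*(s*(z*t)) + s*(z*(s*t)) = t*(z*(s*s)) + t*(s*(z*s)) := by
    intro z
    linear_combination (norm := noncomm_ring) D 1 z - F1 * z
  have R1 : ∀ z : R, (s*t - t*s)*(z*(s*s)) = s*((s*t - t*s)*(z*s)) := by
    intro z
    linear_combination (norm := noncomm_ring) P (s*z) - s * P z - F1 * (z*s)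
  have key : ∀ z : R, (s * (s*t - t*s)) * z * (s * (s*t - t*s)) = 0 := by
    intro z
    apply htor
    linear_combination (norm := noncomm_ring)
      - (R1 z) * (s*t - t*s) + ((s*t - t*s)*z) * F2 + R1 (z*(s*t - t*s))
      + (s*((s*t - t*s)*z)) * hx
  have hw : s * (s*t - t*s) = 0 := hsemiprime _ key
  refine ⟨hw, ?_⟩
  linear_combination (norm := noncomm_ring) hx - hw

theorem stmt_15 (R : Type*) [Ring R]
    (hsemiprime : ∀ a : R, (∀ x : R, a * x * a = 0) → a = 0)
    (htor : ∀ x : R, x + x = 0 → x = 0)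
    (S T : R → R)
    (hSadd : ∀ x y, S (x + y) = S x + S y)
    (hScent : ∀ x y, S (x * y) = S x * y)
    (hTadd : ∀ x y, T (x + y) = T x + T y)
    (hTcent : ∀ x y, T (x * y) = T x * y)
    (hyp : ∀ x : R,
      (S x * T x - T x * S x) * S x + S x * (S x * T x - T x * S x) = 0) :
    ∀ x : R, S x * (S x * T x - T x * S x) = 0 ∧
      (S x * T x - T x * S x) * S x = 0 := by
  intro x
  apply stmt_15_aux R hsemiprime htor (S x) (T x) (hyp x)
  intro y
  have h := hyp (x * y)
  rw [hScent, hTcent] at h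
  linear_combination (norm := noncomm_ring) h
end

section
/- Let M be a Γ-ring satisfying assumption (A), and let S, T : M → M be left centralizers such that [S(x),T(x)]_α = 0 for all x ∈ M and α ∈ Γ. Then T(y)γwβ[S(x),z]_α + S(y)γwβ[z,T(x)]_α = 0 for all x,y,z,w ∈ M and α,β,γ ∈ Γ. -/
theorem stmt_18 (M Γ : Type*) [AddCommGroup M] [AddCommGroup Γ]
    (p : M → Γ → M → M)
    (hadd1 : ∀ x y a z, p (x + y) a z = p x a z + p y a z)
    (hadd2 : ∀ x a b z, p x (a + b) z = p x a z + p x b z)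
    (hadd3 : ∀ x a y z, p x a (y + z) = p x a y + p x a z)
    (hassoc : ∀ x a y b z, p (p x a y) b z = p x a (p y b z))
    (hA : ∀ x a y b z, p (p x a y) b z = p (p x b y) a z)
    (S T : M → M)
    (hSadd : ∀ x y, S (x + y) = S x + S y)
    (hScent : ∀ x a y, S (p x a y) = p (S x) a y)
    (hTadd : ∀ x y, T (x + y) = T x + T y)
    (hTcent : ∀ x a y, T (p x a y) = p (T x) a y)
    (hyp : ∀ (x : M) (a : Γ), p (S x) a (T x) - p (T x) a (S x) = 0) :
    ∀ (x y z w : M) (a b γ : Γ),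
      p (p (T y) γ w) b (p (S x) a z - p z a (S x)) +
        p (p (S y) γ w) b (p z a (T x) - p (T x) a z) = 0 := by
  -- subtraction in each slot
  have hsub1 : ∀ x y a z, p (x - y) a z = p x a z - p y a z := by
    intro x y a z
    rw [eq_sub_iff_add_eq, ← hadd1, sub_add_cancel]
  have hsub3 : ∀ x a y z, p x a (y - z) = p x a y - p x a z := by
    intro x a y z
    rw [eq_sub_iff_add_eq, ← hadd3, sub_add_cancel]
  have hzero1 : ∀ a z, p 0 a z = 0 := by
    intro a z
    have h := hadd1 0 0 a z
    simpa using h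
  -- linearized hypothesis
  have key : ∀ x y a, p (S x) a (T y) + p (S y) a (T x)
      - (p (T x) a (S y) + p (T y) a (S x)) = 0 := by
    intro x y a
    have e : p (S x) a (T y) + p (S y) a (T x)
        - (p (T x) a (S y) + p (T y) a (S x)) =
        (p (S (x + y)) a (T (x + y)) - p (T (x + y)) a (S (x + y)))
          - (p (S x) a (T x) - p (T x) a (S x))
          - (p (S y) a (T y) - p (T y) a (S y)) := by
      rw [hSadd, hTadd, hadd1, hadd1, hadd3, hadd3, hadd3, hadd3]
      abel
    rw [e, hyp (x + y) a, hyp x a, hyp y a]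
    abel
  intro x y z w a b γ
  set u := p (T y) γ w with hu
  set v := p (S y) γ w with hv
  -- key at y ↦ y γ w β z
  have k1 := key x (p (p y γ w) b z) a
  rw [hTcent, hTcent, hScent, hScent, ← hu, ← hv] at k1
  rw [← hassoc (S x) a u b z, ← hassoc (T x) a v b z] at k1
  -- key at y ↦ y γ w, multiplied on the right by z
  have k2 := key x (p y γ w) a
  rw [hTcent, hScent, ← hu, ← hv] at k2
  have k2' : p (p (S x) a u) b z + p (p v a (T x)) b z
      - (p (p (T x) a v) b z + p (p u a (S x)) b z) = 0 := by
    have := congrArg (fun m => p m b z) k2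
    simpa [hadd1, hsub1, hzero1] using this
  have final : p u b (p (S x) a z - p z a (S x)) + p v b (p z a (T x) - p (T x) a z) =
      (p (p (S x) a u) b z + p (p v b z) a (T x)
        - (p (p (T x) a v) b z + p (p u b z) a (S x)))
      - (p (p (S x) a u) b z + p (p v a (T x)) b z
        - (p (p (T x) a v) b z + p (p u a (S x)) b z)) := by
    rw [hsub3, hsub3]
    rw [← hassoc u b (S x) a z, hA u b (S x) a z]
    rw [← hassoc u b z a (S x)]
    rw [← hassoc v b z a (T x)]
    rw [← hassoc v b (T x) a z, hA v b (T x) a z]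
    abel
  rw [final, k1, k2']
  abel
end
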